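/- arXiv:2007.02732 — 6 statements merged into one kernel-verified Lean document; each statement's English description precedes it below -/
import Mathlib

section
/- In a symmetric Frobenius algebra A, the element κ := ∑_{a,b ∈ B} a b a^∨ b^∨ lies in the center of A. -/
/-!
Let `τ y = ∑ i, bᵢ y bᵢ^∨` (the Higman map). Expanding in the basis and in its dual shows that the
Casimir element `∑ i, bᵢ ⊗ bᵢ^∨` satisfies `∑ i, x bᵢ ⊗ bᵢ^∨ = ∑ i, bᵢ ⊗ bᵢ^∨ x` and, by symmetry of
the trace, `∑ i, bᵢ x ⊗ bᵢ^∨ = ∑ i, bᵢ ⊗ x bᵢ^∨` (stated below through an arbitrary bilinear map).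
The first makes every `τ y` central, the second gives `τ (x y) = τ (y x)`. Since
`κ = ∑ j, τ (bⱼ) bⱼ^∨`, moving `x` across the pair `(bⱼ, bⱼ^∨)` turns `κ x` into `∑ j, τ (x bⱼ) bⱼ^∨`
and `x κ` into `∑ j, τ (bⱼ x) bⱼ^∨`.
-/

open Finset

namespace FrobeniusDualBasis

variable {k A ι : Type*} [CommRing k] [Ring A] [Algebra k A] [Fintype ι] [DecidableEq ι]
  (B : Module.Basis ι k A) (tr : A →ₗ[k] k) (d : ι → A)

theorem repr_eq_tr_dual_mul (hd : ∀ i j, tr (d i * B j) = if i = j then 1 else 0)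
    (a : A) (j : ι) : B.repr a j = tr (d j * a) := by
  conv_rhs => rw [← B.sum_repr a, mul_sum, map_sum]
  simp [hd]

theorem sum_tr_dual_mul_smul (hd : ∀ i j, tr (d i * B j) = if i = j then 1 else 0)
    (a : A) : ∑ j, tr (d j * a) • B j = a := by
  simp only [← repr_eq_tr_dual_mul B tr d hd, B.sum_repr]

theorem sum_tr_mul_smul_dual (hnd : ∀ a : A, (∀ b : A, tr (a * b) = 0) → a = 0)
    (hd : ∀ i j, tr (d i * B j) = if i = j then 1 else 0)
    (a : A) : ∑ j, tr (a * B j) • d j = a := by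
  set s := ∑ j, tr (a * B j) • d j
  have on_basis : ∀ m, tr ((a - s) * B m) = 0 := by
    intro m
    simp [s, sub_mul, sum_mul, hd]
  have h : ∀ b : A, tr ((a - s) * b) = 0 := by
    intro b
    rw [← B.sum_repr b, mul_sum, map_sum]
    simp [on_basis]
  exact (sub_eq_zero.mp (hnd _ h)).symm

variable {M : Type*} [AddCommMonoid M] [Module k M] (f : A →ₗ[k] A →ₗ[k] M)

theorem bilin_eq_sum_tr_dual_mul_smul (hd : ∀ i j, tr (d i * B j) = if i = j then 1 else 0)
    (a c : A) : f a c = ∑ m, tr (d m * a) • f (B m) c := by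
  conv_lhs => rw [← sum_tr_dual_mul_smul B tr d hd a]
  simp [LinearMap.sum_apply]

theorem bilin_eq_sum_tr_mul_smul_dual (hnd : ∀ a : A, (∀ b : A, tr (a * b) = 0) → a = 0)
    (hd : ∀ i j, tr (d i * B j) = if i = j then 1 else 0)
    (a c : A) : f a c = ∑ m, tr (c * B m) • f a (d m) := by
  conv_lhs => rw [← sum_tr_mul_smul_dual B tr d hnd hd c]
  simp

theorem sum_apply_mul_basis_dual (hnd : ∀ a : A, (∀ b : A, tr (a * b) = 0) → a = 0)
    (hd : ∀ i j, tr (d i * B j) = if i = j then 1 else 0) (x : A) :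
    ∑ i, f (x * B i) (d i) = ∑ i, f (B i) (d i * x) := by
  calc ∑ i, f (x * B i) (d i) = ∑ i, ∑ m, tr (d m * x * B i) • f (B m) (d i) := by
        simp only [mul_assoc]
        exact sum_congr rfl fun i _ => bilin_eq_sum_tr_dual_mul_smul B tr d f hd _ _
    _ = ∑ i, f (B i) (d i * x) := by
        rw [sum_comm]
        exact sum_congr rfl fun i _ => (bilin_eq_sum_tr_mul_smul_dual B tr d f hnd hd _ _).symm

theorem sum_apply_basis_mul_dual (hsym : ∀ a b : A, tr (a * b) = tr (b * a))
    (hnd : ∀ a : A, (∀ b : A, tr (a * b) = 0) → a = 0)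
    (hd : ∀ i j, tr (d i * B j) = if i = j then 1 else 0) (x : A) :
    ∑ i, f (B i * x) (d i) = ∑ i, f (B i) (x * d i) := by
  calc ∑ i, f (B i * x) (d i) = ∑ i, ∑ m, tr (x * d m * B i) • f (B m) (d i) := by
        refine sum_congr rfl fun i _ => ?_
        simp only [mul_assoc, hsym x]
        exact bilin_eq_sum_tr_dual_mul_smul B tr d f hd _ _
    _ = ∑ i, f (B i) (x * d i) := by
        rw [sum_comm]
        exact sum_congr rfl fun i _ => (bilin_eq_sum_tr_mul_smul_dual B tr d f hnd hd _ _).symm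

variable (k) in
def higmanMap (b c : ι → A) : A →ₗ[k] A :=
  ∑ i, LinearMap.mulLeft k (b i) ∘ₗ LinearMap.mulRight k (c i)

omit [DecidableEq ι] in
theorem higmanMap_apply (b c : ι → A) (y : A) : higmanMap k b c y = ∑ i, b i * y * c i := by
  simp [higmanMap, LinearMap.sum_apply, mul_assoc]

theorem commute_higmanMap (hnd : ∀ a : A, (∀ b : A, tr (a * b) = 0) → a = 0)
    (hd : ∀ i j, tr (d i * B j) = if i = j then 1 else 0) (x y : A) :
    x * higmanMap k B d y = higmanMap k B d y * x := by
  have h := sum_apply_mul_basis_dual B tr d (LinearMap.mul k A ∘ₗ LinearMap.mulRight k y) hnd hd x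
  simp only [LinearMap.comp_apply, LinearMap.mulRight_apply, LinearMap.mul_apply'] at h
  simp only [higmanMap_apply, mul_sum, sum_mul, mul_assoc] at h ⊢
  exact h

theorem higmanMap_mul_comm (hsym : ∀ a b : A, tr (a * b) = tr (b * a))
    (hnd : ∀ a : A, (∀ b : A, tr (a * b) = 0) → a = 0)
    (hd : ∀ i j, tr (d i * B j) = if i = j then 1 else 0) (x y : A) :
    higmanMap k B d (x * y) = higmanMap k B d (y * x) := by
  have h := sum_apply_basis_mul_dual B tr d (LinearMap.mul k A ∘ₗ LinearMap.mulRight k y)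
    hsym hnd hd x
  simp only [LinearMap.comp_apply, LinearMap.mulRight_apply, LinearMap.mul_apply'] at h
  simp only [higmanMap_apply, mul_assoc] at h ⊢
  exact h

end FrobeniusDualBasis

open FrobeniusDualBasis in
/-- In a symmetric Frobenius algebra, `κ = ∑_{a,b∈B} a b a^∨ b^∨` is central. -/
theorem stmt6 {k A : Type*} [Field k] [Ring A] [Algebra k A]
    {ι : Type*} [Fintype ι] [DecidableEq ι]
    (B : Module.Basis ι k A)
    (tr : A →ₗ[k] k)
    (hsym : ∀ a b : A, tr (a * b) = tr (b * a))
    (hnd : ∀ a : A, (∀ b : A, tr (a * b) = 0) → a = 0)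
    (d : ι → A)
    (hd : ∀ i j, tr (d i * B j) = if i = j then 1 else 0)
    (x : A) :
    (∑ i, ∑ j, B i * B j * d i * d j) * x = x * (∑ i, ∑ j, B i * B j * d i * d j) := by
  set τ := higmanMap k B d
  have hκ : ∑ i, ∑ j, B i * B j * d i * d j = ∑ j, τ (B j) * d j := by
    simp only [τ, higmanMap_apply, sum_mul]
    exact sum_comm
  have hf (a c : A) : (LinearMap.mul k A ∘ₗ τ) a c = τ a * c := rfl
  calc (∑ i, ∑ j, B i * B j * d i * d j) * x = ∑ j, τ (B j) * (d j * x) := by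
        rw [hκ, sum_mul]
        simp only [mul_assoc]
    _ = ∑ j, τ (x * B j) * d j := by
        simpa only [hf] using
          (sum_apply_mul_basis_dual B tr d (LinearMap.mul k A ∘ₗ τ) hnd hd x).symm
    _ = ∑ j, τ (B j * x) * d j := by simp only [τ, higmanMap_mul_comm B tr d hsym hnd hd]
    _ = ∑ j, τ (B j) * (x * d j) := by
        simpa only [hf] using
          sum_apply_basis_mul_dual B tr d (LinearMap.mul k A ∘ₗ τ) hsym hnd hd x
    _ = x * ∑ i, ∑ j, B i * B j * d i * d j := by
        rw [hκ, mul_sum]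
        refine sum_congr rfl fun j _ => ?_
        rw [← mul_assoc, ← commute_higmanMap B tr d hnd hd, mul_assoc]
end

section
/- Let A be a symmetric Frobenius algebra with cocenter C(A) = A/[A,A], where [A,A] is the span of commutators. The binary operation a ⋄ b := ∑_{c∈B} a c b c^∨ descends to a well-defined bilinear operation on C(A); i.e., ⟨(aa') ⋄ b⟩ = ⟨(a'a) ⋄ b⟩ and ⟨a ⋄ (bb')⟩ = ⟨a ⋄ (b'b)⟩ for all a, a', b, b' ∈ A. -/
/-!
With `Φ(x) = casimir B d x = ∑ᵢ bᵢ x bᵢ^∨` we have `a ⋄ b = a Φ(b)`. Expanding `w bᵢ` in the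
basis `B` and `bᵢ^∨ w` in the dual basis shows `∑ᵢ w bᵢ ⊗ bᵢ^∨ = ∑ᵢ bᵢ ⊗ bᵢ^∨ w`, and, by the
symmetry of `tr`, `∑ᵢ bᵢ w ⊗ bᵢ^∨ = ∑ᵢ bᵢ ⊗ w bᵢ^∨`. The first identity makes `Φ(x)` central, so
`(a'a) ⋄ b = (a' Φ(b)) a` differs from `(aa') ⋄ b = a (a' Φ(b))` by a commutator; the second gives
`Φ(bb') = Φ(b'b)` on the nose.
-/

open Module

section Casimir

variable {k A ι : Type*}

def casimir [Semiring A] [Fintype ι] (B d : ι → A) (x : A) : A := ∑ i, B i * x * d i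

theorem Submodule.Quotient.mk_mul_comm_span_commutators [Ring k] [Ring A] [Module k A]
    (x y : A) :
    (Submodule.Quotient.mk (x * y) : A ⧸ span k {x : A | ∃ y z : A, x = y * z - z * y})
      = Submodule.Quotient.mk (y * x) :=
  (Submodule.Quotient.eq _).2 (subset_span ⟨x, y, rfl⟩)

section CommRing

variable [DecidableEq ι] [CommRing k] [Ring A] [Algebra k A] (B : Basis ι k A)
  (tr : A →ₗ[k] k) {d : ι → A}

theorem linearIndependent_of_tr_mul_eq_ite
    (hd : ∀ i j, tr (d i * B j) = if i = j then 1 else 0) : LinearIndependent k d :=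
  .of_pairwise_dual_eq_zero_one d (fun i => tr ∘ₗ LinearMap.mulRight k (B i))
    (fun i j hij => by simp [hd, hij.symm]) (fun i => by simp [hd])

theorem Module.Basis.sum_tr_mul_smul [Fintype ι]
    (hd : ∀ i j, tr (d i * B j) = if i = j then 1 else 0) (x : A) :
    ∑ i, tr (d i * x) • B i = x := by
  have hcoord : ∀ i, tr ∘ₗ LinearMap.mulLeft k (d i) = B.coord i := fun i =>
    B.ext fun j => by simp [hd, Finsupp.single_apply, eq_comm]
  conv_rhs => rw [← B.sum_repr x]
  refine Finset.sum_congr rfl fun i _ => ?_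
  rw [← B.coord_apply, ← hcoord i, LinearMap.comp_apply, LinearMap.mulLeft_apply]

end CommRing

section Field

variable [Fintype ι] [DecidableEq ι] [Field k] [Ring A] [Algebra k A] (B : Basis ι k A)
  (tr : A →ₗ[k] k) {d : ι → A}

/-- `d` is linearly independent of cardinality `finrank k A`, hence a basis, and by the
symmetry of `tr` the family `B` is dual to it. -/
theorem Module.Basis.sum_tr_mul_smul_dual (hsym : ∀ a b : A, tr (a * b) = tr (b * a))
    (hd : ∀ i j, tr (d i * B j) = if i = j then 1 else 0) (x : A) :
    ∑ i, tr (x * B i) • d i = x := by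
  have := Module.Finite.of_basis B
  let D : Basis ι k A := basisOfLinearIndependentOfCardEqFinrank' d
    (linearIndependent_of_tr_mul_eq_ite B tr hd) (finrank_eq_card_basis B).symm
  have hD : ⇑D = d := coe_basisOfLinearIndependentOfCardEqFinrank' ..
  have hdual : ∀ i j, tr (B i * D j) = if i = j then 1 else 0 := fun i j => by
    simp [hD, hsym, hd, eq_comm]
  simpa [hD, hsym x] using D.sum_tr_mul_smul tr hdual x

variable {M : Type*} [AddCommGroup M] [Module k M] (F : A →ₗ[k] A →ₗ[k] M)

theorem sum_map_mul_basis_dual_eq (hsym : ∀ a b : A, tr (a * b) = tr (b * a))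
    (hd : ∀ i j, tr (d i * B j) = if i = j then 1 else 0) (w : A) :
    ∑ i, F (w * B i) (d i) = ∑ i, F (B i) (d i * w) := by
  conv_lhs => enter [2, i]; rw [← B.sum_tr_mul_smul tr hd (w * B i)]
  conv_rhs => enter [2, i]; rw [← B.sum_tr_mul_smul_dual tr hsym hd (d i * w)]
  simp only [map_sum, map_smul, LinearMap.sum_apply, LinearMap.smul_apply, mul_assoc]
  exact Finset.sum_comm

theorem sum_map_basis_mul_dual_eq (hsym : ∀ a b : A, tr (a * b) = tr (b * a))
    (hd : ∀ i j, tr (d i * B j) = if i = j then 1 else 0) (w : A) :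
    ∑ i, F (B i * w) (d i) = ∑ i, F (B i) (w * d i) := by
  conv_lhs => enter [2, i]; rw [← B.sum_tr_mul_smul tr hd (B i * w)]
  conv_rhs => enter [2, i]; rw [← B.sum_tr_mul_smul_dual tr hsym hd (w * d i)]
  simp only [map_sum, map_smul, LinearMap.sum_apply, LinearMap.smul_apply]
  rw [Finset.sum_comm]
  simp only [← mul_assoc, hsym _ w]

theorem commute_casimir (hsym : ∀ a b : A, tr (a * b) = tr (b * a))
    (hd : ∀ i j, tr (d i * B j) = if i = j then 1 else 0) (x z : A) :
    Commute z (casimir B d x) := by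
  have h := sum_map_mul_basis_dual_eq B tr ((LinearMap.mul k A).comp (LinearMap.mulRight k x))
    hsym hd z
  simp only [LinearMap.comp_apply, LinearMap.mulRight_apply, LinearMap.mul_apply'] at h
  simpa only [Commute, SemiconjBy, casimir, Finset.mul_sum, Finset.sum_mul, mul_assoc] using h

theorem casimir_mul_comm (hsym : ∀ a b : A, tr (a * b) = tr (b * a))
    (hd : ∀ i j, tr (d i * B j) = if i = j then 1 else 0) (x y : A) :
    casimir B d (x * y) = casimir B d (y * x) := by
  have h := sum_map_basis_mul_dual_eq B tr ((LinearMap.mul k A).comp (LinearMap.mulRight k x))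
    hsym hd y
  simp only [LinearMap.comp_apply, LinearMap.mulRight_apply, LinearMap.mul_apply'] at h
  simpa only [casimir, mul_assoc] using h.symm

end Field

end Casimir

theorem stmt7_general {k A : Type*} [Field k] [Ring A] [Algebra k A]
    {ι : Type*} [Fintype ι] [DecidableEq ι]
    (B : Module.Basis ι k A)
    (tr : A →ₗ[k] k)
    (hsym : ∀ a b : A, tr (a * b) = tr (b * a))
    (d : ι → A)
    (hd : ∀ i j, tr (d i * B j) = if i = j then 1 else 0)
    (diam : A → A → A)
    (hdiam : ∀ a b, diam a b = ∑ i, a * B i * b * d i)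
    (J : Submodule k A)
    (hJ : J = Submodule.span k {x : A | ∃ y z : A, x = y * z - z * y})
    (a a' b b' : A) :
    ((Submodule.Quotient.mk (diam (a * a') b) : A ⧸ J)
        = Submodule.Quotient.mk (diam (a' * a) b)) ∧
    ((Submodule.Quotient.mk (diam a (b * b')) : A ⧸ J)
        = Submodule.Quotient.mk (diam a (b' * b))) := by
  subst hJ
  have hdiam_eq : ∀ u v, diam u v = u * casimir B d v := fun u v => by
    simp only [hdiam, casimir, Finset.mul_sum, mul_assoc]
  refine ⟨?_, by rw [hdiam_eq, hdiam_eq, casimir_mul_comm B tr hsym hd]⟩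
  have hcomm : a' * a * casimir B d b = a' * casimir B d b * a := by
    rw [mul_assoc, (commute_casimir B tr hsym hd b a).eq, mul_assoc]
  rw [hdiam_eq, hdiam_eq, hcomm, mul_assoc]
  exact Submodule.Quotient.mk_mul_comm_span_commutators _ _

/-- The operation `a ⋄ b = ∑_c a c b c^∨` descends to a well-defined bilinear operation on the
cocenter `C(A) = A/[A,A]`: `⟨(aa') ⋄ b⟩ = ⟨(a'a) ⋄ b⟩` and `⟨a ⋄ (bb')⟩ = ⟨a ⋄ (b'b)⟩`. -/
theorem stmt7 {k A : Type*} [Field k] [Ring A] [Algebra k A]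
    {ι : Type*} [Fintype ι] [DecidableEq ι]
    (B : Module.Basis ι k A)
    (tr : A →ₗ[k] k)
    (hsym : ∀ a b : A, tr (a * b) = tr (b * a))
    (hnd : ∀ a : A, (∀ b : A, tr (a * b) = 0) → a = 0)
    (d : ι → A)
    (hd : ∀ i j, tr (d i * B j) = if i = j then 1 else 0)
    (diam : A → A → A)
    (hdiam : ∀ a b, diam a b = ∑ i, a * B i * b * d i)
    (J : Submodule k A)
    (hJ : J = Submodule.span k {x : A | ∃ y z : A, x = y * z - z * y})
    (a a' b b' : A) :
    ((Submodule.Quotient.mk (diam (a * a') b) : A ⧸ J)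
        = Submodule.Quotient.mk (diam (a' * a) b)) ∧
    ((Submodule.Quotient.mk (diam a (b * b')) : A ⧸ J)
        = Submodule.Quotient.mk (diam a (b' * b))) :=
  stmt7_general B tr hsym d hd diam hdiam J hJ a a' b b'
end

section
/- The induced operation ⋄ on the cocenter C(A) of a symmetric Frobenius algebra A is associative: ⟨(a ⋄ b) ⋄ c⟩ = ⟨a ⋄ (b ⋄ c)⟩ for all a, b, c ∈ A, where a ⋄ b = ∑_{e∈B} a e b e^∨. -/
/-!
If `B` is a basis and `d` the dual family with `tr (d i * B j) = δ i j`, the Casimir element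
`∑ j, B j ⊗ d j` commutes with `A`: `∑ j, x * B j ⊗ d j = ∑ j, B j ⊗ d j * x`, as one sees by
expanding `x * B j` in `B` and `d m * x` in `d` (a basis by nondegeneracy). Applied with
`x = d i` inside `(a ⋄ b) ⋄ c = ∑ i j, a * B i * b * d i * B j * c * d j`, it moves `d i` past
`B j * c * d j`, which gives `a ⋄ (b ⋄ c)`. So `⋄` is associative already in `A`, before passing
to the cocenter.
-/

namespace FrobeniusDualBasis

variable {k A ι : Type*} [Field k] [Ring A] [Algebra k A]
  (B : Module.Basis ι k A) (tr : A →ₗ[k] k) {d : ι → A}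

theorem eq_zero_of_trace_mul_basis (hnd : ∀ a : A, (∀ b : A, tr (a * b) = 0) → a = 0)
    {z : A} (hz : ∀ j, tr (z * B j) = 0) : z = 0 := by
  have : tr ∘ₗ LinearMap.mulLeft k z = 0 := B.ext fun j => by simpa using hz j
  exact hnd z fun b => LinearMap.congr_fun this b

variable [DecidableEq ι]

theorem trace_dual_mul_eq_repr (hd : ∀ i j, tr (d i * B j) = if i = j then 1 else 0)
    (i : ι) (y : A) : tr (d i * y) = B.repr y i := by
  have : tr ∘ₗ LinearMap.mulLeft k (d i) = B.coord i :=
    B.ext fun j => by simp [hd, Finsupp.single_apply, eq_comm]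
  exact LinearMap.congr_fun this y

variable [Fintype ι]

theorem sum_trace_dual_mul_smul (hd : ∀ i j, tr (d i * B j) = if i = j then 1 else 0)
    (y : A) : ∑ j, tr (d j * y) • B j = y := by
  simp only [trace_dual_mul_eq_repr B tr hd]
  exact B.sum_repr y

theorem sum_trace_mul_smul_dual (hnd : ∀ a : A, (∀ b : A, tr (a * b) = 0) → a = 0)
    (hd : ∀ i j, tr (d i * B j) = if i = j then 1 else 0) (y : A) :
    ∑ j, tr (y * B j) • d j = y := by
  refine sub_eq_zero.mp (eq_zero_of_trace_mul_basis B tr hnd fun m => ?_)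
  simp [sub_mul, Finset.sum_mul, hd]

theorem sum_bilin_mul_basis_dual (hnd : ∀ a : A, (∀ b : A, tr (a * b) = 0) → a = 0)
    (hd : ∀ i j, tr (d i * B j) = if i = j then 1 else 0)
    {M : Type*} [AddCommGroup M] [Module k M] (φ : A →ₗ[k] A →ₗ[k] M) (x : A) :
    ∑ j, φ (x * B j) (d j) = ∑ j, φ (B j) (d j * x) :=
  calc ∑ j, φ (x * B j) (d j)
      = ∑ j, ∑ m, tr (d m * (x * B j)) • φ (B m) (d j) := by
        refine Finset.sum_congr rfl fun j _ => ?_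
        conv_lhs => rw [← sum_trace_dual_mul_smul B tr hd (x * B j)]
        simp [map_sum, map_smul]
    _ = ∑ m, φ (B m) (∑ j, tr (d m * x * B j) • d j) := by
        rw [Finset.sum_comm]
        simp [map_sum, map_smul, mul_assoc]
    _ = ∑ j, φ (B j) (d j * x) := by
        simp only [sum_trace_mul_smul_dual B tr hnd hd]

variable (d) in
noncomputable def diamond (a b : A) : A := ∑ i, a * B i * b * d i

theorem diamond_assoc (hnd : ∀ a : A, (∀ b : A, tr (a * b) = 0) → a = 0)
    (hd : ∀ i j, tr (d i * B j) = if i = j then 1 else 0) (a b c : A) :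
    diamond B d (diamond B d a b) c = diamond B d a (diamond B d b c) := by
  unfold diamond
  calc ∑ j, (∑ i, a * B i * b * d i) * B j * c * d j
      = ∑ i, ∑ j, a * B i * b * d i * B j * c * d j := by
        simp only [Finset.sum_mul]
        exact Finset.sum_comm
    _ = ∑ i, ∑ j, a * B i * b * B j * c * (d j * d i) := by
        refine Finset.sum_congr rfl fun i _ => ?_
        let φ := (LinearMap.mul k A).compl₁₂
          (LinearMap.mulLeft k (a * B i * b) ∘ₗ LinearMap.mulRight k c) LinearMap.id
        simpa [φ, mul_assoc] using sum_bilin_mul_basis_dual B tr hnd hd φ (d i)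
    _ = ∑ i, a * B i * (∑ j, b * B j * c * d j) * d i := by
        simp only [Finset.mul_sum, Finset.sum_mul, mul_assoc]

end FrobeniusDualBasis

theorem stmt8_general {k A : Type*} [Field k] [Ring A] [Algebra k A]
    {ι : Type*} [Fintype ι] [DecidableEq ι]
    (B : Module.Basis ι k A)
    (tr : A →ₗ[k] k)
    (hnd : ∀ a : A, (∀ b : A, tr (a * b) = 0) → a = 0)
    (d : ι → A)
    (hd : ∀ i j, tr (d i * B j) = if i = j then 1 else 0)
    (diam : A → A → A)
    (hdiam : ∀ a b, diam a b = ∑ i, a * B i * b * d i)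
    (J : Submodule k A)
    (a b c : A) :
    (Submodule.Quotient.mk (diam (diam a b) c) : A ⧸ J)
      = Submodule.Quotient.mk (diam a (diam b c)) := by
  obtain rfl : diam = FrobeniusDualBasis.diamond B d := funext₂ hdiam
  rw [FrobeniusDualBasis.diamond_assoc B tr hnd hd]

/-- The induced operation `⋄` on the cocenter of a symmetric Frobenius algebra is associative:
`⟨(a ⋄ b) ⋄ c⟩ = ⟨a ⋄ (b ⋄ c)⟩`. -/
theorem stmt8 {k A : Type*} [Field k] [Ring A] [Algebra k A]
    {ι : Type*} [Fintype ι] [DecidableEq ι]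
    (B : Module.Basis ι k A)
    (tr : A →ₗ[k] k)
    (hsym : ∀ a b : A, tr (a * b) = tr (b * a))
    (hnd : ∀ a : A, (∀ b : A, tr (a * b) = 0) → a = 0)
    (d : ι → A)
    (hd : ∀ i j, tr (d i * B j) = if i = j then 1 else 0)
    (diam : A → A → A)
    (hdiam : ∀ a b, diam a b = ∑ i, a * B i * b * d i)
    (J : Submodule k A)
    (hJ : J = Submodule.span k {x : A | ∃ y z : A, x = y * z - z * y})
    (a b c : A) :
    (Submodule.Quotient.mk (diam (diam a b) c) : A ⧸ J)
      = Submodule.Quotient.mk (diam a (diam b c)) :=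
  stmt8_general B tr hnd d hd diam hdiam J a b c
end

section
/- The induced operation ⋄ on the cocenter C(A) of a symmetric Frobenius algebra A is commutative: ⟨a ⋄ b⟩ = ⟨b ⋄ a⟩ for all a, b ∈ A, where a ⋄ b = ∑_{c∈B} a c b c^∨. -/
/-!
The Casimir element `∑ i, B i * x * d i` does not change when the roles of the basis and its dual
are swapped: expanding `B i = ∑ j, tr (B i * B j) • d j` turns both sides into the same double sum,
because the Gram matrix `tr (B i * B j)` is symmetric. Modulo commutators, `a ⋄ b` is then moved
cyclically to `(∑ i, d i * a * B i) * b = (∑ i, B i * a * d i) * b`, and once more to `b ⋄ a`.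
-/

open Finset

section DualBasis

variable {k A ι : Type*} [CommRing k] [Ring A] [Algebra k A]
  (B : Module.Basis ι k A) (tr : A →ₗ[k] k)

theorem eq_zero_of_trace_mul_basis_eq_zero (hnd : ∀ a : A, (∀ b : A, tr (a * b) = 0) → a = 0)
    {y : A} (hy : ∀ j, tr (y * B j) = 0) : y = 0 :=
  hnd y fun c => by
    have : tr ∘ₗ LinearMap.mulLeft k y = 0 := B.ext hy
    simpa using LinearMap.congr_fun this c

variable [Fintype ι] [DecidableEq ι] {d : ι → A}

theorem sum_trace_mul_smul_dual (hnd : ∀ a : A, (∀ b : A, tr (a * b) = 0) → a = 0)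
    (hd : ∀ i j, tr (d i * B j) = if i = j then 1 else 0) (x : A) :
    ∑ i, tr (x * B i) • d i = x := by
  rw [← sub_eq_zero]
  refine eq_zero_of_trace_mul_basis_eq_zero B tr hnd fun j => ?_
  simp [sub_mul, sum_mul, hd]

theorem sum_basis_mul_mul_dual_eq_sum_dual_mul_mul_basis
    (hsym : ∀ a b : A, tr (a * b) = tr (b * a))
    (hnd : ∀ a : A, (∀ b : A, tr (a * b) = 0) → a = 0)
    (hd : ∀ i j, tr (d i * B j) = if i = j then 1 else 0) (x : A) :
    ∑ i, B i * x * d i = ∑ i, d i * x * B i := by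
  have expand := sum_trace_mul_smul_dual B tr hnd hd
  calc ∑ i, B i * x * d i = ∑ i, ∑ j, tr (B i * B j) • (d j * x * d i) := by
        refine sum_congr rfl fun i _ => ?_
        conv_lhs => rw [← expand (B i)]
        simp [sum_mul]
    _ = ∑ i, ∑ j, tr (B j * B i) • (d i * x * d j) := by
        rw [sum_comm]
    _ = ∑ i, d i * x * B i := by
        refine sum_congr rfl fun i _ => ?_
        conv_rhs => rw [← expand (B i)]
        simp [mul_sum, hsym]

end DualBasis

section Cocenter

variable (k A : Type*) [CommRing k] [Ring A] [Algebra k A]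

abbrev commutatorSpan : Submodule k A :=
  Submodule.span k {x : A | ∃ y z : A, x = y * z - z * y}

variable {A}

theorem commutatorSpan.mkQ_mul_comm (y z : A) :
    (commutatorSpan k A).mkQ (y * z) = (commutatorSpan k A).mkQ (z * y) :=
  (Submodule.Quotient.eq _).mpr (Submodule.subset_span ⟨y, z, rfl⟩)

end Cocenter

/-- The induced operation `⋄` on the cocenter of a symmetric Frobenius algebra is commutative:
`⟨a ⋄ b⟩ = ⟨b ⋄ a⟩`. -/
theorem stmt9 {k A : Type*} [Field k] [Ring A] [Algebra k A]
    {ι : Type*} [Fintype ι] [DecidableEq ι]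
    (B : Module.Basis ι k A)
    (tr : A →ₗ[k] k)
    (hsym : ∀ a b : A, tr (a * b) = tr (b * a))
    (hnd : ∀ a : A, (∀ b : A, tr (a * b) = 0) → a = 0)
    (d : ι → A)
    (hd : ∀ i j, tr (d i * B j) = if i = j then 1 else 0)
    (diam : A → A → A)
    (hdiam : ∀ a b, diam a b = ∑ i, a * B i * b * d i)
    (J : Submodule k A)
    (hJ : J = Submodule.span k {x : A | ∃ y z : A, x = y * z - z * y})
    (a b : A) :
    (Submodule.Quotient.mk (diam a b) : A ⧸ J)
      = Submodule.Quotient.mk (diam b a) := by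
  subst hJ
  let π := (commutatorSpan k A).mkQ
  change π (diam a b) = π (diam b a)
  calc π (diam a b) = ∑ i, π (d i * a * B i * b) := by
        rw [hdiam, map_sum]
        refine sum_congr rfl fun i _ => ?_
        simpa only [mul_assoc] using commutatorSpan.mkQ_mul_comm k (a * (B i * b)) (d i)
    _ = π ((∑ i, B i * a * d i) * b) := by
        rw [sum_basis_mul_mul_dual_eq_sum_dual_mul_mul_basis B tr hsym hnd hd, sum_mul, map_sum]
    _ = π (diam b a) := by
        rw [hdiam, sum_mul, map_sum, map_sum]
        refine sum_congr rfl fun i _ => ?_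
        simpa only [mul_assoc] using commutatorSpan.mkQ_mul_comm k (B i * (a * d i)) b
end

section
/- Let Γ be a finite group and A = kΓ its group algebra with trace tr(∑ α_g g) = α_{1}. Then (1/|Γ|)·⟨1⟩ is a multiplicative unit for the diamond operation on the cocenter C(A), and the map φ: C(A) → R(Γ), ⟨a⟩ ↦ (z ↦ tr(a ⋄ z)), is an algebra isomorphism from (C(A), ⋄) to the space of class functions R(Γ) with convolution product (f∘g)(z) = ∑_{y∈Γ} f(zy^{-1})g(y). -/
open MonoidAlgebra

/-- The submodule of class functions `R(Γ)` on a group `Γ`. -/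
def classFun (k Γ : Type*) [Field k] [Group Γ] : Submodule k (Γ → k) where
  carrier := {f | ∀ g h : Γ, f (h * g * h⁻¹) = f g}
  add_mem' := by
    intro f f' hf hf' g h
    simp [Pi.add_apply, hf g h, hf' g h]
  zero_mem' := by intro g h; rfl
  smul_mem' := by
    intro c f hf g h
    simp [Pi.smul_apply, hf g h]

/-!
Everything goes through the conjugation sum `conjSum a = ∑ g, g a g⁻¹`, in terms of which
`a ⋄ b = a * conjSum b` and `tr (a ⋄ z) = (conjSum a) (z⁻¹)`. Since `g a g⁻¹ - a` is a
commutator, `conjSum a ≡ |Γ| • a` modulo commutators, while `conjSum` kills commutators because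
`g b` and `b g` are conjugate. Hence the kernel of `a ↦ (z ↦ (conjSum a) (z⁻¹))` is exactly the
commutator span, and it hits every class function `f` (at `|Γ|⁻¹ ∑ f (x⁻¹) x`). Finally
`conjSum (a ⋄ b) = conjSum a * conjSum b`, and for class functions convolution is the product
of `kΓ` read through `z ↦ z⁻¹`.
-/

lemma mul_sub_mul_mem_span_commutators {R A : Type*} [Semiring R] [Ring A] [Module R A]
    (y z : A) : y * z - z * y ∈ Submodule.span R {x | ∃ y z : A, x = y * z - z * y} :=
  Submodule.subset_span ⟨y, z, rfl⟩

namespace MonoidAlgebra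

section Semiring

variable {k G : Type*} [Semiring k] [Group G]

lemma coeff_single_mul_mul_single_inv (g : G) (a : MonoidAlgebra k G) (x : G) :
    (single g 1 * a * single g⁻¹ 1).coeff x = a.coeff (g⁻¹ * x * g) := by
  simp [mul_assoc]

lemma single_inv_mul_single (g : G) : (single g⁻¹ 1 * single g 1 : MonoidAlgebra k G) = 1 := by
  rw [single_mul_single, inv_mul_cancel, one_mul, one_def]

lemma coeff_mul_eq_sum [Fintype G] (a b : MonoidAlgebra k G) (x : G) :
    (a * b).coeff x = ∑ y : G, a.coeff (x * y⁻¹) * b.coeff y := by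
  rw [coeff_mul_apply_right, Finsupp.sum_fintype _ _ (by simp)]

end Semiring

section CommSemiring

variable {k G : Type*} [CommSemiring k] [Group G] [Fintype G]

noncomputable def conjSum : MonoidAlgebra k G →ₗ[k] MonoidAlgebra k G :=
  ∑ g : G, LinearMap.mulLeft k (single g 1) ∘ₗ LinearMap.mulRight k (single g⁻¹ 1)

lemma conjSum_apply (a : MonoidAlgebra k G) :
    conjSum a = ∑ g : G, single g 1 * a * single g⁻¹ 1 := by
  simp [conjSum, mul_assoc]

noncomputable def diamond (a b : MonoidAlgebra k G) : MonoidAlgebra k G :=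
  ∑ g : G, a * single g 1 * b * single g⁻¹ 1

lemma diamond_eq_mul_conjSum (a b : MonoidAlgebra k G) : diamond a b = a * conjSum b := by
  simp [diamond, conjSum_apply, Finset.mul_sum, mul_assoc]

lemma coeff_conjSum (a : MonoidAlgebra k G) (x : G) :
    (conjSum a).coeff x = ∑ g : G, a.coeff (g⁻¹ * x * g) := by
  simp only [conjSum_apply, coeff_sum, Finset.sum_apply', coeff_single_mul_mul_single_inv]

lemma conjSum_single_mul_mul_single_inv (g : G) (a : MonoidAlgebra k G) :
    conjSum (single g 1 * a * single g⁻¹ 1) = conjSum a := by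
  ext x
  simp only [coeff_conjSum, coeff_single_mul_mul_single_inv]
  exact Fintype.sum_equiv (Equiv.mulRight g) _ _ fun h => by simp [mul_assoc]

lemma single_mul_conjSum_mul_single_inv (g : G) (a : MonoidAlgebra k G) :
    single g 1 * conjSum a * single g⁻¹ 1 = conjSum a := by
  ext x
  simp only [coeff_conjSum, coeff_single_mul_mul_single_inv]
  exact Fintype.sum_equiv (Equiv.mulLeft g) _ _ fun h => by simp [mul_assoc]

lemma coeff_conjSum_conj (a : MonoidAlgebra k G) (g x : G) :
    (conjSum a).coeff (g * x * g⁻¹) = (conjSum a).coeff x := by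
  conv_lhs => rw [← single_mul_conjSum_mul_single_inv g a]
  rw [coeff_single_mul_mul_single_inv]
  group

lemma conjSum_one : conjSum (1 : MonoidAlgebra k G) = (Fintype.card G : k) • 1 := by
  simp [conjSum_apply, single_mul_single, ← one_def, Finset.card_univ, Nat.cast_smul_eq_nsmul]

lemma conjSum_mul_comm (a b : MonoidAlgebra k G) : conjSum (a * b) = conjSum (b * a) := by
  induction a using MonoidAlgebra.induction_linear with
  | zero => simp
  | add a a' ha ha' => simp [add_mul, mul_add, ha, ha']
  | single g c =>
    rw [← mul_one c, ← smul_single', smul_mul_assoc, mul_smul_comm, map_smul, map_smul,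
      ← conjSum_single_mul_mul_single_inv g (b * single g 1), mul_assoc, mul_assoc,
      single_mul_single, mul_inv_cancel, mul_one, ← one_def, mul_one]

lemma conjSum_mul_conjSum (a b : MonoidAlgebra k G) :
    conjSum (a * conjSum b) = conjSum a * conjSum b := by
  rw [conjSum_apply, conjSum_apply a, Finset.sum_mul]
  refine Finset.sum_congr rfl fun g _ => ?_
  conv_rhs => rw [← single_mul_conjSum_mul_single_inv g b]
  simp only [mul_assoc]
  rw [← mul_assoc (single g⁻¹ 1) (single g 1), single_inv_mul_single, one_mul]

lemma coeff_one_mul_conjSum_single (a : MonoidAlgebra k G) (z : G) :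
    (a * conjSum (single z 1)).coeff 1 = (conjSum a).coeff z⁻¹ := by
  rw [coeff_conjSum, conjSum_apply, Finset.mul_sum, coeff_sum, Finset.sum_apply']
  refine Fintype.sum_equiv (Equiv.inv G) _ _ fun g => ?_
  simp only [single_mul_single, mul_one, coeff_mul_single_apply, one_mul, Equiv.inv_apply]
  group

end CommSemiring

lemma conjSum_sub_card_smul_mem {k G : Type*} [CommRing k] [Group G] [Fintype G]
    {J : Submodule k (MonoidAlgebra k G)} (hJ : ∀ y z, y * z - z * y ∈ J)
    (a : MonoidAlgebra k G) : conjSum a - (Fintype.card G : k) • a ∈ J := by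
  have hsum : conjSum a - (Fintype.card G : k) • a
      = ∑ g : G, (single g 1 * (a * single g⁻¹ 1) - a * single g⁻¹ 1 * single g 1) := by
    simp [Finset.sum_sub_distrib, conjSum_apply, mul_assoc, single_mul_single, ← one_def,
      Finset.card_univ, Nat.cast_smul_eq_nsmul]
  rw [hsum]
  exact J.sum_mem fun g _ => hJ _ _

section Field

variable {k G : Type*} [Field k] [Group G] [Fintype G]

lemma inv_card_smul_conjSum_sub_mem (hG : (Fintype.card G : k) ≠ 0)
    {J : Submodule k (MonoidAlgebra k G)} (hJ : ∀ y z, y * z - z * y ∈ J)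
    (a : MonoidAlgebra k G) : (Fintype.card G : k)⁻¹ • conjSum a - a ∈ J := by
  have := J.smul_mem (Fintype.card G : k)⁻¹ (conjSum_sub_card_smul_mem hJ a)
  rwa [smul_sub, smul_smul, inv_mul_cancel₀ hG, one_smul] at this

/-- The paper's `φ`, before passing to the cocenter; `coeff_one_mul_conjSum_single` says that
`(conjSum a) (z⁻¹) = tr (a ⋄ z)`. -/
noncomputable def toClassFun : MonoidAlgebra k G →ₗ[k] classFun k G :=
  LinearMap.codRestrict (classFun k G)
    (LinearMap.funLeft k k Inv.inv ∘ₗ Finsupp.lcoeFun ∘ₗ (coeffLinearEquiv k).toLinearMap ∘ₗ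
      conjSum)
    fun a g h => by
      simp only [LinearMap.comp_apply, LinearMap.funLeft_apply]
      rw [show (h * g * h⁻¹)⁻¹ = h * g⁻¹ * h⁻¹ by group]
      exact coeff_conjSum_conj a h g⁻¹

lemma toClassFun_apply (a : MonoidAlgebra k G) (z : G) :
    (toClassFun a : G → k) z = (conjSum a).coeff z⁻¹ := rfl

lemma toClassFun_surjective (hG : (Fintype.card G : k) ≠ 0) :
    Function.Surjective (toClassFun (k := k) (G := G)) := by
  intro f
  refine ⟨(Fintype.card G : k)⁻¹ •
    ofCoeff (Finsupp.equivFunOnFinite.symm fun x => (f : G → k) x⁻¹), ?_⟩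
  ext z
  have hterm : ∀ g : G, (f : G → k) (g⁻¹ * (z * g)) = (f : G → k) z := fun g => by
    simpa [mul_assoc] using f.2 z g⁻¹
  simp [toClassFun_apply, coeff_conjSum, hterm, hG]

lemma ker_toClassFun (hG : (Fintype.card G : k) ≠ 0) :
    LinearMap.ker (toClassFun (k := k) (G := G)) =
      Submodule.span k {x | ∃ y z : MonoidAlgebra k G, x = y * z - z * y} := by
  refine le_antisymm (fun a ha => ?_) ?_
  · have hA : conjSum a = 0 := by
      ext x
      simpa [toClassFun_apply] using congr_fun (congr_arg Subtype.val ha) x⁻¹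
    simpa [hA] using Submodule.neg_mem _
      (inv_card_smul_conjSum_sub_mem hG mul_sub_mul_mem_span_commutators a)
  · rw [Submodule.span_le]
    rintro _ ⟨y, z, rfl⟩
    ext x
    simp [toClassFun_apply, conjSum_mul_comm]

lemma toClassFun_diamond (a b : MonoidAlgebra k G) (z : G) :
    (toClassFun (diamond a b) : G → k) z =
      ∑ y : G, (toClassFun a : G → k) (z * y⁻¹) * (toClassFun b : G → k) y := by
  simp only [toClassFun_apply, diamond_eq_mul_conjSum, conjSum_mul_conjSum, coeff_mul_eq_sum]
  refine Fintype.sum_equiv (Equiv.inv G) _ _ fun y => ?_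
  rw [← coeff_conjSum_conj a y⁻¹ (z⁻¹ * y⁻¹)]
  simp [mul_assoc]

noncomputable def cocenterEquivClassFun (hG : (Fintype.card G : k) ≠ 0) :
    (MonoidAlgebra k G ⧸ Submodule.span k {x | ∃ y z : MonoidAlgebra k G, x = y * z - z * y})
      ≃ₗ[k] classFun k G :=
  (Submodule.quotEquivOfEq _ _ (ker_toClassFun hG).symm).trans
    (LinearMap.quotKerEquivOfSurjective _ (toClassFun_surjective hG))

lemma cocenterEquivClassFun_mk (hG : (Fintype.card G : k) ≠ 0) (a : MonoidAlgebra k G) :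
    cocenterEquivClassFun hG (Submodule.Quotient.mk a) = toClassFun a :=
  rfl

end Field

end MonoidAlgebra

theorem stmt12_general {k Γ : Type*} [Field k] [CharZero k] [Group Γ] [Fintype Γ]
    (diam : MonoidAlgebra k Γ → MonoidAlgebra k Γ → MonoidAlgebra k Γ)
    (hdiam : ∀ a b, diam a b = ∑ g : Γ, a * single g 1 * b * single g⁻¹ 1)
    (J : Submodule k (MonoidAlgebra k Γ))
    (hJ : J = Submodule.span k
      {x : MonoidAlgebra k Γ | ∃ y z : MonoidAlgebra k Γ, x = y * z - z * y})
    (u : MonoidAlgebra k Γ)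
    (hu : u = ((Fintype.card Γ : k)⁻¹) • (1 : MonoidAlgebra k Γ)) :
    (∀ a : MonoidAlgebra k Γ,
      (Submodule.Quotient.mk (diam u a) : MonoidAlgebra k Γ ⧸ J) = Submodule.Quotient.mk a) ∧
    (∀ a : MonoidAlgebra k Γ,
      (Submodule.Quotient.mk (diam a u) : MonoidAlgebra k Γ ⧸ J) = Submodule.Quotient.mk a) ∧
    (∃ ψ : (MonoidAlgebra k Γ ⧸ J) ≃ₗ[k] classFun k Γ,
      (∀ (a : MonoidAlgebra k Γ) (z : Γ),
        (ψ (Submodule.Quotient.mk a) : Γ → k) z = (diam a (single z 1)).coeff 1) ∧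
      (∀ (a b : MonoidAlgebra k Γ) (z : Γ),
        (ψ (Submodule.Quotient.mk (diam a b)) : Γ → k) z
          = ∑ y : Γ, (ψ (Submodule.Quotient.mk a) : Γ → k) (z * y⁻¹) *
              (ψ (Submodule.Quotient.mk b) : Γ → k) y)) := by
  obtain rfl : diam = diamond := funext₂ hdiam
  subst hJ hu
  have hG : (Fintype.card Γ : k) ≠ 0 := Nat.cast_ne_zero.2 Fintype.card_ne_zero
  refine ⟨fun a => ?_, fun a => ?_, cocenterEquivClassFun hG, fun a z => ?_, fun a b z => ?_⟩
  · rw [Submodule.Quotient.eq, diamond_eq_mul_conjSum, smul_mul_assoc, one_mul]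
    exact inv_card_smul_conjSum_sub_mem hG mul_sub_mul_mem_span_commutators a
  · rw [diamond_eq_mul_conjSum, map_smul, conjSum_one, smul_smul, inv_mul_cancel₀ hG, one_smul,
      mul_one]
  · rw [cocenterEquivClassFun_mk, toClassFun_apply, diamond_eq_mul_conjSum,
      coeff_one_mul_conjSum_single]
  · simp only [cocenterEquivClassFun_mk, toClassFun_diamond]

/-- For the group algebra `A = kΓ` with trace `tr(∑ α_g g) = α_1`: the element
`(1/|Γ|)⟨1⟩` is a unit for the diamond operation on the cocenter `C(A)`, and
`φ : C(A) → R(Γ)`, `⟨a⟩ ↦ (z ↦ tr(a ⋄ z))`, is an algebra isomorphism onto the class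
functions with the convolution product. -/
theorem stmt12 {k Γ : Type*} [Field k] [CharZero k] [Group Γ] [Fintype Γ] [DecidableEq Γ]
    (diam : MonoidAlgebra k Γ → MonoidAlgebra k Γ → MonoidAlgebra k Γ)
    (hdiam : ∀ a b, diam a b = ∑ g : Γ, a * single g 1 * b * single g⁻¹ 1)
    (J : Submodule k (MonoidAlgebra k Γ))
    (hJ : J = Submodule.span k
      {x : MonoidAlgebra k Γ | ∃ y z : MonoidAlgebra k Γ, x = y * z - z * y})
    (u : MonoidAlgebra k Γ)
    (hu : u = ((Fintype.card Γ : k)⁻¹) • (1 : MonoidAlgebra k Γ)) :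
    (∀ a : MonoidAlgebra k Γ,
      (Submodule.Quotient.mk (diam u a) : MonoidAlgebra k Γ ⧸ J) = Submodule.Quotient.mk a) ∧
    (∀ a : MonoidAlgebra k Γ,
      (Submodule.Quotient.mk (diam a u) : MonoidAlgebra k Γ ⧸ J) = Submodule.Quotient.mk a) ∧
    (∃ ψ : (MonoidAlgebra k Γ ⧸ J) ≃ₗ[k] classFun k Γ,
      (∀ (a : MonoidAlgebra k Γ) (z : Γ),
        (ψ (Submodule.Quotient.mk a) : Γ → k) z = (diam a (single z 1)).coeff 1) ∧
      (∀ (a b : MonoidAlgebra k Γ) (z : Γ),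
        (ψ (Submodule.Quotient.mk (diam a b)) : Γ → k) z
          = ∑ y : Γ, (ψ (Submodule.Quotient.mk a) : Γ → k) (z * y⁻¹) *
              (ψ (Submodule.Quotient.mk b) : Γ → k) y)) :=
  stmt12_general diam hdiam J hJ u hu
end

section
/- For integers m, n with l+m+n = 0, and commuting variables u, v, w, X, the identity sinh((n v/2 − m w/2)X)·sinh((l/2)(u+v+w)X) + sinh((l w/2 − n u/2)X)·sinh((m/2)(u+v+w)X) + sinh((m u/2 − l v/2)X)·sinh((n/2)(u+v+w)X) = 0 holds as formal power series. -/
open Real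

lemma sinh_mul_sinh' (a b : ℝ) :
    sinh a * sinh b = (cosh (a + b) - cosh (a - b)) / 2 := by
  rw [Real.cosh_add, Real.cosh_sub]; ring

/-- For integers `l, m, n` with `l + m + n = 0`, the cyclic `sinh` identity
`sinh((nv/2 − mw/2)X) sinh((l/2)(u+v+w)X) + sinh((lw/2 − nu/2)X) sinh((m/2)(u+v+w)X)
 + sinh((mu/2 − lv/2)X) sinh((n/2)(u+v+w)X) = 0` holds. -/
theorem stmt16 (l m n : ℤ) (hlmn : l + m + n = 0) (u v w X : ℝ) :
    sinh (((n : ℝ) * v / 2 - (m : ℝ) * w / 2) * X) * sinh ((l : ℝ) / 2 * (u + v + w) * X) +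
      sinh (((l : ℝ) * w / 2 - (n : ℝ) * u / 2) * X) * sinh ((m : ℝ) / 2 * (u + v + w) * X) +
      sinh (((m : ℝ) * u / 2 - (l : ℝ) * v / 2) * X) * sinh ((n : ℝ) / 2 * (u + v + w) * X)
      = 0 := by
  have hl : (l : ℝ) = -((m : ℝ) + (n : ℝ)) := by
    have : ((l + m + n : ℤ) : ℝ) = 0 := by rw [hlmn]; simp
    push_cast at this; linarith
  simp only [sinh_mul_sinh', hl]
  rw [show ((-((m : ℝ) + n)) * w / 2 - (n : ℝ) * u / 2) * X - (m : ℝ) / 2 * (u + v + w) * X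
      = ((n : ℝ) * v / 2 - (m : ℝ) * w / 2) * X + -((m : ℝ) + n) / 2 * (u + v + w) * X by ring,
    show ((m : ℝ) * u / 2 - (-((m : ℝ) + n)) * v / 2) * X + (n : ℝ) / 2 * (u + v + w) * X
      = ((n : ℝ) * v / 2 - (m : ℝ) * w / 2) * X - -((m : ℝ) + n) / 2 * (u + v + w) * X by ring,
    show ((m : ℝ) * u / 2 - (-((m : ℝ) + n)) * v / 2) * X - (n : ℝ) / 2 * (u + v + w) * X
      = ((-((m : ℝ) + n)) * w / 2 - (n : ℝ) * u / 2) * X + (m : ℝ) / 2 * (u + v + w) * X by ring]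
  ring
end
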